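/- Let q : ℝ → ℝ be defined by q(u) = (1/2)·(1 − u/(1 + π²(u−1)²)) if u < 1 and q(u) = −u/(2(1 + π²(u−1)²)) if u ≥ 1. Then for every sequence u : ℕ → ℝ and every t ≥ 1, |∏_{k=1}^{t} q(u_k)| ≤ (13/25)^t; consequently ∏_{k=1}^{t} q(u_k) → 0 as t → ∞. -/
import Mathlib

lemma lif_key_bound (q : ℝ → ℝ)
    (hq : ∀ u : ℝ, q u =
      if u < 1 then (1/2) * (1 - u / (1 + Real.pi ^ 2 * (u - 1) ^ 2))
      else -u / (2 * (1 + Real.pi ^ 2 * (u - 1) ^ 2))) :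
    ∀ u : ℝ, |q u| ≤ 13 / 25 := by
  intro u
  have hpi : (9 : ℝ) < Real.pi ^ 2 := by
    nlinarith [Real.pi_gt_three]
  have hD : (0 : ℝ) < 1 + Real.pi ^ 2 * (u - 1) ^ 2 := by positivity
  rw [hq u, abs_le]
  split_ifs with h
  · have h1 : u / (1 + Real.pi ^ 2 * (u - 1) ^ 2) ≤ 51/25 := by
      rw [div_le_iff₀ hD]; nlinarith [sq_nonneg (u - 1)]
    have h2 : -(1/25 : ℝ) ≤ u / (1 + Real.pi ^ 2 * (u - 1) ^ 2) := by
      rw [le_div_iff₀ hD]; nlinarith [sq_nonneg (2*Real.pi^2*(u-1)+25), sq_nonneg (u-1), hpi]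
    constructor <;> linarith
  · push_neg at h
    have h2d : (0:ℝ) < 2 * (1 + Real.pi ^ 2 * (u - 1) ^ 2) := by positivity
    constructor
    · rw [neg_div, neg_le_neg_iff, div_le_iff₀ h2d]
      nlinarith [sq_nonneg (52*Real.pi^2*(u-1) - 25), sq_nonneg (u-1), hpi]
    · have : -u / (2 * (1 + Real.pi ^ 2 * (u - 1) ^ 2)) ≤ 0 := by
        apply div_nonpos_of_nonpos_of_nonneg <;> linarith
      linarith

theorem lif_hard_reset_product_vanishes
    (q : ℝ → ℝ)
    (hq : ∀ u : ℝ, q u =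
      if u < 1 then (1/2) * (1 - u / (1 + Real.pi ^ 2 * (u - 1) ^ 2))
      else -u / (2 * (1 + Real.pi ^ 2 * (u - 1) ^ 2))) :
    ∀ u : ℕ → ℝ,
      (∀ t : ℕ, 1 ≤ t → |∏ k ∈ Finset.Icc 1 t, q (u k)| ≤ (13 / 25 : ℝ) ^ t) ∧
      Filter.Tendsto (fun t : ℕ => ∏ k ∈ Finset.Icc 1 t, q (u k))
        Filter.atTop (nhds 0) := by
  intro u
  have key : ∀ t : ℕ, |∏ k ∈ Finset.Icc 1 t, q (u k)| ≤ (13 / 25 : ℝ) ^ t := by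
    intro t
    calc |∏ k ∈ Finset.Icc 1 t, q (u k)| = ∏ k ∈ Finset.Icc 1 t, |q (u k)| :=
          Finset.abs_prod _ _
      _ ≤ ∏ k ∈ Finset.Icc 1 t, (13/25 : ℝ) :=
          Finset.prod_le_prod (fun i _ => abs_nonneg _)
            (fun i _ => lif_key_bound q hq (u i))
      _ = (13/25 : ℝ) ^ t := by
          rw [Finset.prod_const, Nat.card_Icc, Nat.add_sub_cancel]
  refine ⟨fun t _ => key t, ?_⟩
  apply squeeze_zero_norm (fun t => key t)
  exact tendsto_pow_atTop_nhds_zero_of_lt_one (by norm_num) (by norm_num)
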